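/- Let ν be a Borel probability measure on [0,1] whose support is not a singleton, and suppose ν is self-similar: ν = Σ_{i=1}^m p_i ν∘f_i^{−1} for contracting similarities f_i of ℝ and probabilities p_i > 0. Then s(ν) = sup{ t ≥ 0 : ∃ C > 0 with ν(I) ≤ C|I|^t for all intervals I ⊆ [0,1] } is strictly positive. -/

import Mathlib

open MeasureTheory Filter
open scoped ENNReal ENat Topology

/-- Smallest number of sets of diameter ≤ r needed to cover E. -/
noncomputable def coverNum {X : Type*} [PseudoMetricSpace X] (r : ℝ) (E : Set X) : ℕ∞ :=
  sInf {n : ℕ∞ | ∃ 𝒰 : Finset (Set X), (𝒰.card : ℕ∞) = n ∧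
    (∀ U ∈ 𝒰, Metric.diam U ≤ r) ∧ E ⊆ ⋃₀ ↑𝒰}

/-- Assouad dimension. -/
noncomputable def assouadDim {X : Type*} [PseudoMetricSpace X] (F : Set X) : ℝ :=
  sInf {d : ℝ | ∃ C : ℝ, 0 < C ∧ ∀ R r : ℝ, 0 < r → r < R → ∀ x ∈ F,
    (coverNum r (Metric.ball x R ∩ F) : ℝ≥0∞) ≤ ENNReal.ofReal (C * (R / r) ^ d)}

/-- (Upper) box-counting dimension. -/
noncomputable def boxDim {X : Type*} [PseudoMetricSpace X] (E : Set X) : ℝ :=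
  Filter.limsup (fun r : ℝ => Real.log ((coverNum r E).toNat : ℝ) / (-Real.log r)) (𝓝[>] 0)

/-- Frostman exponent w.r.t. subintervals of [0,1]. -/
noncomputable def frostmanExp01 (ν : Measure ℝ) : ℝ :=
  sSup {t : ℝ | 0 ≤ t ∧ ∃ C : ℝ, 0 < C ∧ ∀ a b : ℝ, 0 ≤ a → a ≤ b → b ≤ 1 →
    ν (Set.Icc a b) ≤ ENNReal.ofReal (C * (b - a) ^ t)}

/-- Frostman exponent w.r.t. all intervals of ℝ. -/
noncomputable def frostmanExp (ν : Measure ℝ) : ℝ :=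
  sSup {t : ℝ | 0 ≤ t ∧ ∃ C : ℝ, 0 < C ∧ ∀ a b : ℝ, a ≤ b →
    ν (Set.Icc a b) ≤ ENNReal.ofReal (C * (b - a) ^ t)}

/-- Topological support of a measure on ℝ. -/
noncomputable def mSupp (ν : Measure ℝ) : Set ℝ :=
  {x | ∀ r : ℝ, 0 < r → 0 < ν (Metric.ball x r)}

/-- The packing quantity M_r^q(ν): supremum of Σ ν(B(xᵢ,r))^q over finite
centered packings of supp ν by pairwise disjoint balls of radius r. -/
noncomputable def Mrq (ν : Measure ℝ) (q r : ℝ) : ℝ≥0∞ :=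
  sSup {v : ℝ≥0∞ | ∃ P : Finset ℝ, ↑P ⊆ mSupp ν ∧
    (↑P : Set ℝ).Pairwise (fun x y => Disjoint (Metric.ball x r) (Metric.ball y r)) ∧
    v = ∑ x ∈ P, ν (Metric.ball x r) ^ q}

/-- The closed unit square. -/
def unitSq : Set (ℝ × ℝ) := Set.Icc (0:ℝ) 1 ×ˢ Set.Icc (0:ℝ) 1

/-- Composition S_{i₁} ∘ ⋯ ∘ S_{i_k} for a finite word. -/
def itMap {m : ℕ} (S : Fin m → ℝ × ℝ → ℝ × ℝ) (w : List (Fin m)) : ℝ × ℝ → ℝ × ℝ :=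
  w.foldr (fun i f => S i ∘ f) id

/-- ν is the (rescaled) Bernoulli convolution with parameter b: the unique
probability measure on [0,1] satisfying the self-similarity relation
ν = ½ ν∘(b·)⁻¹ + ½ ν∘(b·+(1−b))⁻¹. -/
def IsBernoulliConv (b : ℝ) (ν : Measure ℝ) : Prop :=
  IsProbabilityMeasure ν ∧ ν (Set.Icc (0:ℝ) 1)ᶜ = 0 ∧
    ν = (1/2 : ℝ≥0∞) • ν.map (fun x => b * x) + (1/2 : ℝ≥0∞) • ν.map (fun x => b * x + (1 - b))


/-!
Choose two points `x, y` of the support with `dist x y = 6 r` and iterate the system until every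
cylinder `g k '' supp ν` has diameter at most `r`. The cylinders meeting a set `A` of diameter at
most `r` stay within `2 r` of `A`, so they miss one of the balls `B(x, r)`, `B(y, r)`; hence their
total weight is at most `γ = 1 - min (ν B(x, r)) (ν B(y, r)) < 1`. Pulling `A` back through a
cylinder map enlarges its diameter by at most `1 / ρ`, `ρ` the smallest ratio, so by induction
`ν A ≤ γ ^ n` whenever `diam A ≤ r ρ ^ n`: a Frostman bound with exponent `log γ / log ρ`.
The set of Frostman exponents of a measure charging `[0, 1]` is bounded by `1`, since `[0, 1]` is
covered by `N` intervals of length `1 / N`.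
-/

open Set

structure IsSelfSimilar {ι : Type*} [Fintype ι] (ν : Measure ℝ) (p : ι → ℝ≥0∞)
    (f : ι → ℝ → ℝ) (c : ι → ℝ) : Prop where
  dist_eq : ∀ i x y, dist (f i x) (f i y) = c i * dist x y
  eq_sum_map : ν = ∑ i, p i • ν.map (f i)

theorem continuous_of_dist_eq_mul {f : ℝ → ℝ} {c : ℝ}
    (h : ∀ x y, dist (f x) (f y) = c * dist x y) : Continuous f :=
  (LipschitzWith.of_dist_le_mul (K := c.toNNReal) fun x y => by
    rw [h]; exact mul_le_mul_of_nonneg_right (Real.le_coe_toNNReal c) dist_nonneg).continuous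

theorem MeasureTheory.Measure.map_finsetSum {α β ι : Type*} [MeasurableSpace α] [MeasurableSpace β]
    {f : α → β} (hf : Measurable f) (s : Finset ι) (μ : ι → Measure α) :
    (∑ i ∈ s, μ i).map f = ∑ i ∈ s, (μ i).map f := by
  simp only [← mapₗ_apply_of_measurable hf, _root_.map_sum]

theorem exists_lt_forall_le_of_finite {α κ : Type*} [Finite κ] [LinearOrder α] [NoMinOrder α]
    {d : κ → α} {b : α} (hd : ∀ k, d k < b) : ∃ a < b, ∀ k, d k ≤ a := by
  rcases isEmpty_or_nonempty κ with _ | _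
  · obtain ⟨a, ha⟩ := exists_lt b
    exact ⟨a, ha, fun k => isEmptyElim k⟩
  · obtain ⟨k₀, hk₀⟩ := Finite.exists_max d
    exact ⟨d k₀, hd k₀, hk₀⟩

theorem exists_gt_forall_le_of_finite {α κ : Type*} [Finite κ] [LinearOrder α] [NoMaxOrder α]
    {d : κ → α} {b : α} (hd : ∀ k, b < d k) : ∃ a > b, ∀ k, a ≤ d k :=
  exists_lt_forall_le_of_finite (α := αᵒᵈ) hd

namespace IsSelfSimilar

variable {ι κ : Type*} [Fintype ι] [Fintype κ] {ν : Measure ℝ} {p : ι → ℝ≥0∞} {f : ι → ℝ → ℝ}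
  {c : ι → ℝ} {q : κ → ℝ≥0∞} {g : κ → ℝ → ℝ} {d : κ → ℝ}

theorem measurable (h : IsSelfSimilar ν p f c) (i : ι) : Measurable (f i) :=
  (continuous_of_dist_eq_mul (h.dist_eq i)).measurable

theorem comp (h₁ : IsSelfSimilar ν p f c) (h₂ : IsSelfSimilar ν q g d) :
    IsSelfSimilar ν (fun ik : ι × κ => p ik.1 * q ik.2) (fun ik => f ik.1 ∘ g ik.2)
      (fun ik => c ik.1 * d ik.2) where
  dist_eq ik x y := by
    rw [Function.comp_apply, Function.comp_apply, h₁.dist_eq, h₂.dist_eq, mul_assoc]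
  eq_sum_map := by
    conv_lhs => rw [h₁.eq_sum_map]
    rw [Fintype.sum_prod_type]
    refine Finset.sum_congr rfl fun i _ => ?_
    conv_lhs => rw [h₂.eq_sum_map]
    rw [Measure.map_finsetSum (h₁.measurable i), Finset.smul_sum]
    refine Finset.sum_congr rfl fun k _ => ?_
    rw [Measure.map_smul, Measure.map_map (h₁.measurable i) (h₂.measurable k), smul_smul]

theorem exists_ratio_le {ι : Type} [Fintype ι] {p : ι → ℝ≥0∞} {f : ι → ℝ → ℝ} {c : ι → ℝ}
    (h : IsSelfSimilar ν p f c) (hc : ∀ i, 0 < c i ∧ c i < 1) {δ : ℝ} (hδ : 0 < δ) :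
    ∃ (κ : Type) (_ : Fintype κ) (q : κ → ℝ≥0∞) (g : κ → ℝ → ℝ) (d : κ → ℝ),
      IsSelfSimilar ν q g d ∧ ∀ k, 0 < d k ∧ d k ≤ δ := by
  obtain ⟨a, ha, hca⟩ := exists_lt_forall_le_of_finite fun i => (hc i).2
  set θ := max a 0
  have hθ : θ < 1 := max_lt ha one_pos
  have refinement : ∀ n : ℕ, ∃ (κ : Type) (_ : Fintype κ) (q : κ → ℝ≥0∞) (g : κ → ℝ → ℝ)
      (d : κ → ℝ), IsSelfSimilar ν q g d ∧ ∀ k, 0 < d k ∧ d k ≤ θ ^ n := by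
    intro n
    induction n with
    | zero =>
      refine ⟨Unit, inferInstance, fun _ => 1, fun _ => id, fun _ => 1, ⟨by simp, by simp⟩,
        fun _ => by simp⟩
    | succ n ih =>
      obtain ⟨κ, _, q, g, d, hss, hd⟩ := ih
      refine ⟨ι × κ, inferInstance, _, _, _, h.comp hss, fun ik => ⟨?_, ?_⟩⟩
      · exact mul_pos (hc ik.1).1 (hd ik.2).1
      · rw [pow_succ']
        exact mul_le_mul ((hca ik.1).trans (le_max_left _ _)) (hd ik.2).2 (hd ik.2).1.le
          (le_max_right _ _)
  obtain ⟨n, hn⟩ := exists_pow_lt_of_lt_one hδ hθ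
  obtain ⟨κ, _, q, g, d, hss, hd⟩ := refinement n
  exact ⟨κ, _, q, g, d, hss, fun k => ⟨(hd k).1, (hd k).2.trans hn.le⟩⟩

end IsSelfSimilar

theorem measure_compl_mSupp (ν : Measure ℝ) : ν (mSupp ν)ᶜ = 0 := by
  refine measure_null_of_locally_null _ fun x hx => ?_
  obtain ⟨r, hr, hr0⟩ : ∃ r > 0, ν (Metric.ball x r) = 0 := by
    simpa [mSupp] using hx
  exact ⟨Metric.ball x r, mem_nhdsWithin_of_mem_nhds (Metric.ball_mem_nhds x hr), hr0⟩

theorem mSupp_subset_of_measure_compl_eq_zero {ν : Measure ℝ} {s : Set ℝ} (hs : IsClosed s)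
    (hν : ν sᶜ = 0) : mSupp ν ⊆ s := by
  intro x hx
  by_contra hxs
  obtain ⟨r, hr, hball⟩ := Metric.isOpen_iff.1 hs.isOpen_compl x hxs
  exact (hx r hr).ne' (measure_mono_null hball hν)

theorem measure_preimage_eq_zero_of_image_mSupp_disjoint {ν : Measure ℝ} {g : ℝ → ℝ} {A : Set ℝ}
    (h : Disjoint (g '' mSupp ν) A) : ν (g ⁻¹' A) = 0 :=
  measure_mono_null (fun _ hxA hx => h.ne_of_mem (mem_image_of_mem g hx) hxA rfl)
    (measure_compl_mSupp ν)

noncomputable def cylindersMeeting {κ : Type*} [Fintype κ] (g : κ → ℝ → ℝ) (K A : Set ℝ) :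
    Finset κ :=
  open scoped Classical in Finset.univ.filter fun k => ¬ Disjoint (g k '' K) A

theorem mem_cylindersMeeting {κ : Type*} [Fintype κ] {g : κ → ℝ → ℝ} {K A : Set ℝ} {k : κ} :
    k ∈ cylindersMeeting g K A ↔ ¬ Disjoint (g k '' K) A := by
  simp [cylindersMeeting]

theorem notMem_cylindersMeeting {κ : Type*} [Fintype κ] {g : κ → ℝ → ℝ} {K A : Set ℝ} {k : κ} :
    k ∉ cylindersMeeting g K A ↔ Disjoint (g k '' K) A := by
  simp [cylindersMeeting]

theorem dist_le_of_mem_preimage {g : ℝ → ℝ} {c s : ℝ} (hg : ∀ x y, dist (g x) (g y) = c * dist x y)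
    (hc : 0 < c) {A : Set ℝ} (hA : ∀ u ∈ A, ∀ v ∈ A, dist u v ≤ c * s) :
    ∀ u ∈ g ⁻¹' A, ∀ v ∈ g ⁻¹' A, dist u v ≤ s := fun u hu v hv =>
  le_of_mul_le_mul_left (by rw [← hg]; exact hA _ hu _ hv) hc

namespace IsSelfSimilar

open Metric

variable {κ : Type*} [Fintype κ] {ν : Measure ℝ} {q : κ → ℝ≥0∞} {g : κ → ℝ → ℝ} {d : κ → ℝ}

theorem measure_eq_sum (h : IsSelfSimilar ν q g d) {A : Set ℝ} (hA : MeasurableSet A) :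
    ν A = ∑ k, q k * ν (g k ⁻¹' A) := by
  conv_lhs => rw [h.eq_sum_map]
  simp only [Measure.coe_finsetSum, Finset.sum_apply, Measure.smul_apply,
    Measure.map_apply (h.measurable _) hA, smul_eq_mul]

theorem sum_eq_one [IsProbabilityMeasure ν] (h : IsSelfSimilar ν q g d) : ∑ k, q k = 1 := by
  simpa using (h.measure_eq_sum MeasurableSet.univ).symm

theorem measure_eq_sum_cylindersMeeting (h : IsSelfSimilar ν q g d) {A : Set ℝ}
    (hA : MeasurableSet A) :
    ν A = ∑ k ∈ cylindersMeeting g (mSupp ν) A, q k * ν (g k ⁻¹' A) := by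
  rw [h.measure_eq_sum hA]
  refine (Finset.sum_subset (Finset.subset_univ _) fun k _ hk => ?_).symm
  rw [measure_preimage_eq_zero_of_image_mSupp_disjoint (notMem_cylindersMeeting.1 hk), mul_zero]

theorem sum_cylindersMeeting_add_measure_le_one [IsProbabilityMeasure ν]
    (h : IsSelfSimilar ν q g d) {A B : Set ℝ} (hB : MeasurableSet B)
    (hAB : ∀ k ∈ cylindersMeeting g (mSupp ν) A, Disjoint (g k '' mSupp ν) B) :
    ∑ k ∈ cylindersMeeting g (mSupp ν) A, q k + ν B ≤ 1 := by
  classical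
  set I := cylindersMeeting g (mSupp ν) A
  have hB' : ν B ≤ ∑ k ∈ Finset.univ \ I, q k := by
    rw [h.measure_eq_sum hB, ← Finset.sum_sdiff (Finset.subset_univ I),
      Finset.sum_eq_zero (s := I) fun k hk => by
        rw [measure_preimage_eq_zero_of_image_mSupp_disjoint (hAB k hk), mul_zero], add_zero]
    exact Finset.sum_le_sum fun k _ => mul_le_of_le_one_right' prob_le_one
  calc ∑ k ∈ I, q k + ν B ≤ ∑ k ∈ I, q k + ∑ k ∈ Finset.univ \ I, q k := by gcongr
    _ = 1 := by rw [add_comm, Finset.sum_sdiff (Finset.subset_univ I), h.sum_eq_one]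

theorem sum_cylindersMeeting_le [IsProbabilityMeasure ν] (h : IsSelfSimilar ν q g d)
    {x y r : ℝ} (hxy : 6 * r ≤ dist x y)
    (hcyl : ∀ k, ∀ u ∈ g k '' mSupp ν, ∀ v ∈ g k '' mSupp ν, dist u v ≤ r)
    {A : Set ℝ} (hA : ∀ u ∈ A, ∀ v ∈ A, dist u v ≤ r) :
    ∑ k ∈ cylindersMeeting g (mSupp ν) A, q k ≤ 1 - min (ν (ball x r)) (ν (ball y r)) := by
  rcases A.eq_empty_or_nonempty with rfl | ⟨a, ha⟩
  · simp [cylindersMeeting]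
  have hnear : ∀ k ∈ cylindersMeeting g (mSupp ν) A, g k '' mSupp ν ⊆ closedBall a (2 * r) := by
    intro k hk u hu
    obtain ⟨v, hvK, hvA⟩ := not_disjoint_iff.1 (mem_cylindersMeeting.1 hk)
    rw [mem_closedBall]
    linarith [dist_triangle u v a, hcyl k u hu v hvK, hA v hvA a ha]
  have hfar : ∀ z, 3 * r ≤ dist a z →
      ∑ k ∈ cylindersMeeting g (mSupp ν) A, q k ≤ 1 - ν (ball z r) := fun z hz =>
    ENNReal.le_sub_of_add_le_right (measure_ne_top ν _)
      (h.sum_cylindersMeeting_add_measure_le_one measurableSet_ball fun k hk =>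
        (closedBall_disjoint_ball (by linarith)).mono_left (hnear k hk))
  rcases le_total (3 * r) (dist a x) with hx | hx
  · exact (hfar x hx).trans (tsub_le_tsub_left (min_le_left _ _) 1)
  · have hy : 3 * r ≤ dist a y := by linarith [dist_triangle x a y, dist_comm a x]
    exact (hfar y hy).trans (tsub_le_tsub_left (min_le_right _ _) 1)

theorem measure_le_pow [IsProbabilityMeasure ν] (h : IsSelfSimilar ν q g d) {r ρ : ℝ}
    {γ : ℝ≥0∞} (hr : 0 ≤ r) (hρ0 : 0 < ρ) (hρ1 : ρ ≤ 1) (hρ : ∀ k, ρ ≤ d k)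
    (hγ : ∀ A : Set ℝ, (∀ u ∈ A, ∀ v ∈ A, dist u v ≤ r) →
      ∑ k ∈ cylindersMeeting g (mSupp ν) A, q k ≤ γ)
    (n : ℕ) {A : Set ℝ} (hA : MeasurableSet A) (hAr : ∀ u ∈ A, ∀ v ∈ A, dist u v ≤ r * ρ ^ n) :
    ν A ≤ γ ^ n := by
  induction n generalizing A with
  | zero => simpa using prob_le_one
  | succ n ih =>
    have hpre : ∀ k, ν (g k ⁻¹' A) ≤ γ ^ n := fun k =>
      ih ((h.measurable k) hA) <| dist_le_of_mem_preimage (h.dist_eq k) (hρ0.trans_le (hρ k))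
        fun u hu v hv => (hAr u hu v hv).trans <| by
          rw [pow_succ', ← mul_assoc, mul_comm r, mul_assoc]
          exact mul_le_mul_of_nonneg_right (hρ k) (by positivity)
    have hAr' : ∀ u ∈ A, ∀ v ∈ A, dist u v ≤ r := fun u hu v hv =>
      (hAr u hu v hv).trans (mul_le_of_le_one_right hr (pow_le_one₀ hρ0.le hρ1))
    calc ν A = ∑ k ∈ cylindersMeeting g (mSupp ν) A, q k * ν (g k ⁻¹' A) :=
          h.measure_eq_sum_cylindersMeeting hA
      _ ≤ ∑ k ∈ cylindersMeeting g (mSupp ν) A, q k * γ ^ n := by gcongr with k; exact hpre k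
      _ = (∑ k ∈ cylindersMeeting g (mSupp ν) A, q k) * γ ^ n := (Finset.sum_mul ..).symm
      _ ≤ γ * γ ^ n := by gcongr; exact hγ A hAr'
      _ = γ ^ (n + 1) := (pow_succ' γ n).symm

end IsSelfSimilar

theorem exists_measure_Icc_le_rpow_of_le_pow {ν : Measure ℝ} [IsProbabilityMeasure ν]
    {r ρ : ℝ} {γ : ℝ≥0∞} (hr : 0 < r) (hρ0 : 0 < ρ) (hρ1 : ρ < 1) (hγ : γ < 1)
    (h : ∀ n : ℕ, ∀ a b, a ≤ b → b - a ≤ r * ρ ^ n → ν (Icc a b) ≤ γ ^ n) :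
    ∃ t > (0 : ℝ), ∃ C > (0 : ℝ), ∀ a b, a ≤ b →
      ν (Icc a b) ≤ ENNReal.ofReal (C * (b - a) ^ t) := by
  -- `θ ≥ ρ` keeps `θ` positive, so that `logb ρ θ` is meaningful, also when `γ = 0`.
  set θ := max γ.toReal ρ
  have hθ0 : 0 < θ := lt_max_of_lt_right hρ0
  have hθ1 : θ < 1 := max_lt (ENNReal.toReal_lt_of_lt_ofReal (by simpa using hγ)) hρ1
  set t := Real.logb ρ θ
  have ht : 0 < t := Real.logb_pos_of_base_lt_one hρ0 hρ1 hθ0 hθ1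
  refine ⟨t, ht, (ρ * r) ^ (-t), by positivity, fun a b hab => ?_⟩
  rw [Real.rpow_neg (by positivity), inv_mul_eq_div, ← Real.div_rpow (sub_nonneg.2 hab)
    (by positivity)]
  rcases (sub_nonneg.2 hab).eq_or_lt with hab' | hpos
  · have hpt : ν (Icc a b) = 0 := le_antisymm (ge_of_tendsto'
      (ENNReal.tendsto_pow_atTop_nhds_zero_of_lt_one hγ)
      fun n => h n a b hab (by rw [← hab']; positivity)) bot_le
    rw [hpt]
    exact bot_le
  rcases le_or_gt (b - a) r with hle | hgt
  · obtain ⟨n, hn1, hn⟩ := exists_nat_pow_near_of_lt_one (div_pos hpos hr)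
      ((div_le_one hr).2 hle) hρ0 hρ1
    have hρn : ρ ^ n ≤ (b - a) / (ρ * r) := by
      rw [mul_comm ρ r, ← div_div, le_div_iff₀ hρ0, ← pow_succ]
      exact hn1.le
    calc ν (Icc a b) ≤ γ ^ n := h n a b hab (by rwa [div_le_iff₀' hr] at hn)
      _ = ENNReal.ofReal (γ.toReal ^ n) := by
        rw [ENNReal.ofReal_pow ENNReal.toReal_nonneg, ENNReal.ofReal_toReal hγ.ne_top]
      _ ≤ ENNReal.ofReal ((ρ ^ t) ^ n) := by
        rw [Real.rpow_logb hρ0 hρ1.ne hθ0]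
        gcongr
        exact le_max_left _ _
      _ ≤ ENNReal.ofReal (((b - a) / (ρ * r)) ^ t) := by
        rw [← Real.rpow_natCast, ← Real.rpow_mul hρ0.le, mul_comm, Real.rpow_mul hρ0.le,
          Real.rpow_natCast]
        exact ENNReal.ofReal_le_ofReal (Real.rpow_le_rpow (by positivity) hρn ht.le)
  · calc ν (Icc a b) ≤ ENNReal.ofReal 1 := by simpa using prob_le_one
      _ ≤ ENNReal.ofReal (((b - a) / (ρ * r)) ^ t) := by
        refine ENNReal.ofReal_le_ofReal (Real.one_le_rpow ?_ ht.le)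
        rw [one_le_div (by positivity)]
        nlinarith

theorem Icc_zero_one_subset_biUnion {N : ℕ} (hN : 0 < N) :
    Icc (0 : ℝ) 1 ⊆ ⋃ k ∈ Finset.range N, Icc ((k : ℝ) / N) ((k + 1) / N) := by
  rintro x ⟨hx0, hx1⟩
  have hN' : (0 : ℝ) < N := Nat.cast_pos.2 hN
  simp only [mem_iUnion, Finset.mem_range, mem_Icc, exists_prop]
  refine ⟨min ⌊x * N⌋₊ (N - 1), by omega, ?_, ?_⟩
  · rw [div_le_iff₀ hN']
    exact (Nat.cast_le.2 (min_le_left _ _)).trans (Nat.floor_le (by positivity))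
  · rw [le_div_iff₀ hN']
    rcases le_total ⌊x * N⌋₊ (N - 1) with h | h
    · rw [min_eq_left h]
      exact (Nat.lt_floor_add_one _).le
    · rw [min_eq_right h, Nat.cast_sub hN, Nat.cast_one, sub_add_cancel]
      nlinarith

theorem le_one_of_measure_Icc_le_rpow {ν : Measure ℝ} (h0 : ν (Icc 0 1) ≠ 0) {t C : ℝ}
    (h : ∀ a b, 0 ≤ a → a ≤ b → b ≤ 1 → ν (Icc a b) ≤ ENNReal.ofReal (C * (b - a) ^ t)) :
    t ≤ 1 := by
  by_contra! ht
  have hbound : ∀ N : ℕ, 0 < N → ν (Icc 0 1) ≤ ENNReal.ofReal (C * ((N : ℝ) ^ (t - 1))⁻¹) := by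
    intro N hN
    have hN' : (0 : ℝ) < N := Nat.cast_pos.2 hN
    calc ν (Icc 0 1) ≤ ∑ k ∈ Finset.range N, ν (Icc ((k : ℝ) / N) ((k + 1) / N)) :=
          (measure_mono (Icc_zero_one_subset_biUnion hN)).trans (measure_biUnion_finset_le _ _)
      _ ≤ ∑ k ∈ Finset.range N, ENNReal.ofReal (C * (1 / N) ^ t) := by
        gcongr with k hk
        have hk' : (k : ℝ) + 1 ≤ N := by exact_mod_cast Finset.mem_range.1 hk
        have hlen : ((k : ℝ) + 1) / N - k / N = 1 / N := by ring
        simpa only [hlen] using h (k / N) ((k + 1) / N) (by positivity)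
          (div_le_div_of_nonneg_right (by linarith) hN'.le) ((div_le_one hN').2 hk')
      _ = ENNReal.ofReal (C * ((N : ℝ) ^ (t - 1))⁻¹) := by
        rw [Finset.sum_const, Finset.card_range, nsmul_eq_mul, ← ENNReal.ofReal_natCast,
          ← ENNReal.ofReal_mul (Nat.cast_nonneg _), Real.rpow_sub_one hN'.ne', one_div,
          Real.inv_rpow hN'.le]
        congr 1
        field_simp
  have hlim : Tendsto (fun N : ℕ => ENNReal.ofReal (C * ((N : ℝ) ^ (t - 1))⁻¹)) atTop (𝓝 0) := by
    have := ENNReal.tendsto_ofReal (((tendsto_rpow_atTop (sub_pos.2 ht)).comp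
      tendsto_natCast_atTop_atTop).inv_tendsto_atTop.const_mul C)
    simpa using this
  exact h0 (le_antisymm (ge_of_tendsto hlim (eventually_atTop.2 ⟨1, hbound⟩)) bot_le)

theorem le_frostmanExp01 {ν : Measure ℝ} (h0 : ν (Icc 0 1) ≠ 0) {t C : ℝ} (ht : 0 ≤ t)
    (hC : 0 < C)
    (h : ∀ a b, 0 ≤ a → a ≤ b → b ≤ 1 → ν (Icc a b) ≤ ENNReal.ofReal (C * (b - a) ^ t)) :
    t ≤ frostmanExp01 ν :=
  le_csSup ⟨1, fun _ ⟨_, _, _, hs⟩ => le_one_of_measure_Icc_le_rpow h0 hs⟩ ⟨ht, C, hC, h⟩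

theorem mSupp_nonempty (ν : Measure ℝ) [NeZero ν] : (mSupp ν).Nonempty := by
  by_contra h
  have hcompl := measure_compl_mSupp ν
  rw [not_nonempty_iff_eq_empty.1 h, compl_empty, Measure.measure_univ_eq_zero] at hcompl
  exact NeZero.ne ν hcompl

open Metric in
theorem IsSelfSimilar.exists_measure_Icc_le_rpow {ι : Type} [Fintype ι] {ν : Measure ℝ}
    [IsProbabilityMeasure ν] {p : ι → ℝ≥0∞} {f : ι → ℝ → ℝ} {c : ι → ℝ}
    (h : IsSelfSimilar ν p f c) (hc : ∀ i, 0 < c i ∧ c i < 1)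
    (hbdd : Bornology.IsBounded (mSupp ν)) (hnt : (mSupp ν).Nontrivial) :
    ∃ t > (0 : ℝ), ∃ C > (0 : ℝ), ∀ a b, a ≤ b →
      ν (Icc a b) ≤ ENNReal.ofReal (C * (b - a) ^ t) := by
  obtain ⟨x, hx, y, hy, hxy⟩ := hnt
  set K := mSupp ν
  set r := dist x y / 6
  have hr : 0 < r := div_pos (dist_pos.2 hxy) (by norm_num)
  have hD : 0 < diam K := (dist_pos.2 hxy).trans_le (dist_le_diam_of_mem hbdd hx hy)
  obtain ⟨κ, _, q, g, d, hss, hd⟩ := h.exists_ratio_le hc (div_pos hr hD)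
  obtain ⟨ρ, hρ0, hρd⟩ := exists_gt_forall_le_of_finite fun k => (hd k).1
  have hcyl : ∀ k, ∀ u ∈ g k '' K, ∀ v ∈ g k '' K, dist u v ≤ r := by
    rintro k _ ⟨u, hu, rfl⟩ _ ⟨v, hv, rfl⟩
    rw [hss.dist_eq]
    calc d k * dist u v ≤ r / diam K * diam K :=
          mul_le_mul (hd k).2 (dist_le_diam_of_mem hbdd hu hv) dist_nonneg (by positivity)
      _ = r := div_mul_cancel₀ _ hD.ne'
  have hε : min (ν (ball x r)) (ν (ball y r)) ≠ 0 := (lt_min (hx r hr) (hy r hr)).ne'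
  set ρ' := min ρ (1 / 2)
  have hρ'0 : 0 < ρ' := lt_min hρ0 one_half_pos
  have hρ'1 : ρ' < 1 := min_lt_of_right_lt one_half_lt_one
  refine exists_measure_Icc_le_rpow_of_le_pow hr hρ'0 hρ'1
    (ENNReal.sub_lt_self ENNReal.one_ne_top one_ne_zero hε) fun n a b hab hn => ?_
  exact hss.measure_le_pow hr.le hρ'0 hρ'1.le (fun k => (min_le_left _ _).trans (hρd k))
    (fun A hA => hss.sum_cylindersMeeting_le (by simp only [r]; linarith) hcyl hA) n
    measurableSet_Icc fun u hu v hv => (Real.dist_le_of_mem_Icc hu hv).trans hn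

theorem stmt14_general (ν : Measure ℝ) [IsProbabilityMeasure ν] (hsupp : ν (Set.Icc (0:ℝ) 1)ᶜ = 0)
    (m : ℕ) (p : Fin m → ℝ≥0∞)
    (f : Fin m → ℝ → ℝ) (c : Fin m → ℝ) (hc : ∀ i, 0 < c i ∧ c i < 1)
    (hsim : ∀ i x y, dist (f i x) (f i y) = c i * dist x y)
    (hself : ν = ∑ i, p i • ν.map (f i))
    (hns : ¬ ∃ x : ℝ, mSupp ν = {x}) :
    0 < frostmanExp01 ν := by
  have hK : mSupp ν ⊆ Icc 0 1 := mSupp_subset_of_measure_compl_eq_zero isClosed_Icc hsupp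
  have hnt : (mSupp ν).Nontrivial :=
    (mSupp_nonempty ν).exists_eq_singleton_or_nontrivial.resolve_left hns
  obtain ⟨t, ht, C, hC, hν⟩ := (IsSelfSimilar.mk hsim hself).exists_measure_Icc_le_rpow hc
    ((Metric.isBounded_Icc 0 1).subset hK) hnt
  have hν01 : ν (Icc 0 1) ≠ 0 := by
    rw [(prob_compl_eq_zero_iff measurableSet_Icc).1 hsupp]
    exact one_ne_zero
  exact ht.trans_le (le_frostmanExp01 hν01 ht.le hC fun a b _ hab _ => hν a b hab)

theorem stmt14 (ν : Measure ℝ) [IsProbabilityMeasure ν] (hsupp : ν (Set.Icc (0:ℝ) 1)ᶜ = 0)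
    (m : ℕ) (hm : 1 ≤ m) (p : Fin m → ℝ≥0∞) (hp : ∀ i, 0 < p i) (hpsum : ∑ i, p i = 1)
    (f : Fin m → ℝ → ℝ) (c : Fin m → ℝ) (hc : ∀ i, 0 < c i ∧ c i < 1)
    (hsim : ∀ i x y, dist (f i x) (f i y) = c i * dist x y)
    (hself : ν = ∑ i, p i • ν.map (f i))
    (hns : ¬ ∃ x : ℝ, mSupp ν = {x}) :
    0 < frostmanExp01 ν :=
  stmt14_general ν hsupp m p f c hc hsim hself hns
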